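/- Let G_{τ₁,m} and G_{τ₂,m} be isomorphic historical m-hop subgraphs via π with time offset Δ = t' − t, and let the random walk sets S₁ = (S_u,S_v,S_w) within G_{τ₁,m} (M independent length-m annotated temporal random walks from each of (u,t), (v,t), (w,t)) and S₂ = (S_{u'},S_{v'},S_{w'}) within G_{τ₂,m} (from (u',t'), (v',t'), (w',t')) be sampled as above, assuming all encountered candidate sets are nonempty. Fix any vector-valued functions F₁ and F₂ defining the asymmetric distance encoding I. Then for every node a of G_{τ₁,m} and every possible encoding value x, the probability that a appears on some walk of S_u ∪ S_v ∪ S_w and I(a|S_u,S_v,S_w) = x equals the probability that π(a) appears on some walk of S_{u'} ∪ S_{v'} ∪ S_{w'} and I(π(a)|S_{u'},S_{v'},S_{w'}) = x. Consequently, conditioned on the respective appearance events (when they have positive probability), I(a|S_u,S_v,S_w) and I(π(a)|S_{u'},S_{v'},S_{w'}) have the same distribution. -/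

import Mathlib

/-!
An isomorphism `(π, Δ)` of temporal hypergraphs preserves hyperedge sizes and, up to the time
shift `Δ`, candidate sets; hence it preserves every sampling weight and every normalising sum.
Pushing walks forward along `π` is therefore a probability-preserving bijection between the walks
from `(z, t)` in `H₁` that stay inside its node set (all others have probability zero) and the
corresponding walks from `(π z, t + Δ)` in `H₂`. The push-forward sends the node at each position
to its image, so it preserves the appearance event and every distance encoding. Finally, `b + c`
and `|b - c|` are symmetric in `b` and `c`, so the asymmetric encoding does not change when `π`
exchanges `u` and `v`.
-/

open scoped Classical

namespace HIT

variable {V V' : Type*}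

/-- The candidate set `C(z,s)` of temporal hyperedges containing `z` with timestamp before `s`. -/
noncomputable def cand (H : Finset (Finset V × ℝ)) (z : V) (s : ℝ) :
    Finset (Finset V × ℝ) :=
  H.filter (fun et => z ∈ et.1 ∧ et.2 < s)

/-- The sampling weight `w(e,t;s) = (|e|−1)·exp(α·(s−t))` of a temporal hyperedge. -/
noncomputable def weight (α : ℝ) (s : ℝ) (et : Finset V × ℝ) : ℝ :=
  ((et.1.card : ℝ) - 1) * Real.exp (α * (s - et.2))

/-- An annotated temporal random walk, recorded as the list of steps `((e_l,t_l),z_l)`,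
is valid from current node `z` and current time `s` if each hyperedge is a candidate at the
current state and the next node is drawn from the hyperedge minus the current node. -/
def ValidWalk (H : Finset (Finset V × ℝ)) : V → ℝ → List ((Finset V × ℝ) × V) → Prop
  | _, _, [] => True
  | z, s, (et, z') :: rest =>
      et ∈ H ∧ z ∈ et.1 ∧ et.2 < s ∧ z' ∈ et.1 ∧ z' ≠ z ∧ ValidWalk H z' et.2 rest

/-- The sampling probability `P(W)` of an annotated temporal random walk. -/
noncomputable def walkProb (α : ℝ) (H : Finset (Finset V × ℝ)) :
    V → ℝ → List ((Finset V × ℝ) × V) → ℝ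
  | _, _, [] => 1
  | z, s, (et, z') :: rest =>
      (weight α s et / ∑ et' ∈ cand H z s, weight α s et') *
        (1 / ((et.1.card : ℝ) - 1)) * walkProb α H z' et.2 rest

/-- The state (current node, current time) reached after following a walk. -/
def endState : V → ℝ → List ((Finset V × ℝ) × V) → V × ℝ
  | z, s, [] => (z, s)
  | _, _, (et, z') :: rest => endState z' et.2 rest

/-- The node set of a temporal hypergraph: all nodes covered by its hyperedges. -/
noncomputable def nodes [DecidableEq V] (H : Finset (Finset V × ℝ)) : Finset V :=
  H.biUnion (fun et => et.1)

/-- `π` together with the time offset `Δ` is an isomorphism of temporal hypergraphs from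
`H1` to `H2`: `π` is a bijection from the node set of `H1` onto the node set of `H2`, and
`(ẽ,t̃)` is a temporal hyperedge of `H1` iff `(π(ẽ), t̃+Δ)` is a temporal hyperedge of `H2`. -/
structure IsIso [DecidableEq V] [DecidableEq V'] (π : V → V') (Δ : ℝ)
    (H1 : Finset (Finset V × ℝ)) (H2 : Finset (Finset V' × ℝ)) : Prop where
  injOn : Set.InjOn π (nodes H1 : Set V)
  image_nodes : (nodes H1).image π = nodes H2
  map_mem : ∀ e s, (e, s) ∈ H1 → (e.image π, s + Δ) ∈ H2
  mem_map : ∀ e' s', (e', s') ∈ H2 → ∃ e s, (e, s) ∈ H1 ∧ e' = e.image π ∧ s' = s + Δ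

/-- A length-`m` sequence of sampling steps, each step consisting of a temporal hyperedge
of `H` and a next node. -/
abbrev StepSeq (H : Finset (Finset V × ℝ)) (m : ℕ) := Fin m → ({x // x ∈ H} × V)

/-- Encode a step sequence as a walk (a list of steps). -/
def stepToList {H : Finset (Finset V × ℝ)} {m : ℕ} (f : StepSeq H m) :
    List ((Finset V × ℝ) × V) :=
  List.ofFn fun i => (((f i).1 : Finset V × ℝ), (f i).2)

/-- The probability of sampling a given step sequence as an annotated temporal random walk
starting at `(z0, t0)` (zero if the sequence is not a valid walk). -/
noncomputable def sampleProb (α : ℝ) (H : Finset (Finset V × ℝ)) (z0 : V) (t0 : ℝ)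
    {m : ℕ} (f : StepSeq H m) : ℝ :=
  if ValidWalk H z0 t0 (stepToList f) then walkProb α H z0 t0 (stepToList f) else 0

/-- The node at position `i ∈ {0,…,m}` of a walk given by a step sequence starting at `z0`. -/
def nodeAt {H : Finset (Finset V × ℝ)} {m : ℕ} (z0 : V) (f : StepSeq H m)
    (i : Fin (m + 1)) : V :=
  if h : i = 0 then z0 else (f (i.pred h)).2

/-- An outcome `ω` of the whole sampling experiment consists of `M` step sequences for each
of the three start nodes; the node `a` appears in the sampled walks if it is the node at
some position of some of the `3M` walks. -/
def appearsOn {H : Finset (Finset V × ℝ)} {m M : ℕ} (starts : Fin 3 → V)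
    (ω : Fin 3 → Fin M → StepSeq H m) (a : V) : Prop :=
  ∃ j i p, nodeAt (starts j) (ω j i) p = a

/-- The joint probability of an outcome: the `3M` walks are sampled independently, `M` from
each start node, all with initial time `t0`. -/
noncomputable def jointProb (α : ℝ) (H : Finset (Finset V × ℝ)) (starts : Fin 3 → V)
    (t0 : ℝ) {m M : ℕ} (ω : Fin 3 → Fin M → StepSeq H m) : ℝ :=
  ∏ j, ∏ i, sampleProb α H (starts j) t0 (ω j i)

/-- The probability that the node `a` appears on some walk of `S₁ = S_u ∪ S_v ∪ S_w`. -/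
noncomputable def appearProb [Fintype V] (α : ℝ) (H : Finset (Finset V × ℝ))
    (starts : Fin 3 → V) (t0 : ℝ) (m M : ℕ) (a : V) : ℝ :=
  ∑ ω : Fin 3 → Fin M → StepSeq H m,
    if appearsOn starts ω a then jointProb α H starts t0 ω else 0

/-- The distance encoding `g(a;S_z)` of the node `a` with respect to the sampled set of `M`
walks from the start node `z0`: its `i`-th entry counts the sampled walks whose node at
position `i` is `a`. -/
noncomputable def gSample {H : Finset (Finset V × ℝ)} {m M : ℕ} (z0 : V)
    (ws : Fin M → StepSeq H m) (a : V) : Fin (m + 1) → ℕ :=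
  fun i => (Finset.univ.filter (fun j : Fin M => nodeAt z0 (ws j) i = a)).card

/-- The asymmetric distance encoding `I(a|S_u,S_v,S_w) = F₁((b+c) ⊕ |b−c|)` of the node `a`
with respect to the sampled walk sets, where `b = F₂(g(a;S_u) ⊕ g(a;S_w))`,
`c = F₂(g(a;S_v) ⊕ g(a;S_w))`; concatenation `⊕` is realized by `Sum.elim` and `|·|` is
taken entrywise. -/
noncomputable def sampleDE {d d' m : ℕ}
    (F1 : ((Fin d ⊕ Fin d) → ℝ) → (Fin d' → ℝ))
    (F2 : ((Fin (m + 1) ⊕ Fin (m + 1)) → ℕ) → (Fin d → ℝ))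
    {H : Finset (Finset V × ℝ)} {M : ℕ} (starts : Fin 3 → V)
    (ω : Fin 3 → Fin M → StepSeq H m) (a : V) : Fin d' → ℝ :=
  let b := F2 (Sum.elim (gSample (starts 0) (ω 0) a) (gSample (starts 2) (ω 2) a))
  let c := F2 (Sum.elim (gSample (starts 1) (ω 1) a) (gSample (starts 2) (ω 2) a))
  F1 (Sum.elim (fun j => b j + c j) (fun j => |b j - c j|))

/-- The probability that the node `a` appears on some sampled walk and its asymmetric
distance encoding equals `x`. -/
noncomputable def appearEncProb [Fintype V] (α : ℝ) (H : Finset (Finset V × ℝ))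
    (starts : Fin 3 → V) (t0 : ℝ) (m M : ℕ) {d d' : ℕ}
    (F1 : ((Fin d ⊕ Fin d) → ℝ) → (Fin d' → ℝ))
    (F2 : ((Fin (m + 1) ⊕ Fin (m + 1)) → ℕ) → (Fin d → ℝ))
    (a : V) (x : Fin d' → ℝ) : ℝ :=
  ∑ ω : Fin 3 → Fin M → StepSeq H m,
    if appearsOn starts ω a ∧ sampleDE F1 F2 starts ω a = x
    then jointProb α H starts t0 ω else 0

-- Stated before any `[DecidableEq V]` binder, so that it matches the classical instance in `cand`.
lemma mem_cand {H : Finset (Finset V × ℝ)} {z : V} {s : ℝ} {et : Finset V × ℝ} :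
    et ∈ cand H z s ↔ et ∈ H ∧ z ∈ et.1 ∧ et.2 < s :=
  Finset.mem_filter

section Nodes

variable [DecidableEq V] {H : Finset (Finset V × ℝ)}

lemma mem_nodes {et : Finset V × ℝ} (h : et ∈ H) {z : V} (hz : z ∈ et.1) : z ∈ nodes H :=
  Finset.mem_biUnion.2 ⟨et, h, hz⟩

lemma coe_subset_nodes {et : Finset V × ℝ} (h : et ∈ H) : (et.1 : Set V) ⊆ nodes H :=
  fun _ hz => mem_nodes h hz

lemma mem_nodes_of_cand_nonempty {z : V} {s : ℝ} (h : (cand H z s).Nonempty) : z ∈ nodes H := by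
  obtain ⟨et, het⟩ := h
  obtain ⟨hH, hz, -⟩ := mem_cand.1 het
  exact mem_nodes hH hz

lemma ValidWalk.mem_nodes : ∀ {z : V} {s : ℝ} {L : List ((Finset V × ℝ) × V)},
    ValidWalk H z s L → ∀ p ∈ L, p.2 ∈ nodes H
  | _, _, [], _, _, hp => absurd hp List.not_mem_nil
  | _, _, (et, _) :: _, ⟨het, _, _, hz', _, hL⟩, _, hp => by
    rcases List.mem_cons.1 hp with rfl | hp
    · exact HIT.mem_nodes het hz'
    · exact hL.mem_nodes _ hp

end Nodes

namespace IsIso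

variable [DecidableEq V] [DecidableEq V'] {π : V → V'} {Δ : ℝ}
  {H1 : Finset (Finset V × ℝ)} {H2 : Finset (Finset V' × ℝ)}

lemma map_mem_nodes (hiso : IsIso π Δ H1 H2) {z : V} (hz : z ∈ nodes H1) : π z ∈ nodes H2 :=
  hiso.image_nodes ▸ Finset.mem_image_of_mem π hz

lemma card_image (hiso : IsIso π Δ H1 H2) {et : Finset V × ℝ} (het : et ∈ H1) :
    (et.1.image π).card = et.1.card :=
  Finset.card_image_of_injOn (hiso.injOn.mono (coe_subset_nodes het))

lemma mem_image_iff (hiso : IsIso π Δ H1 H2) {et : Finset V × ℝ} (het : et ∈ H1) {z : V}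
    (hz : z ∈ nodes H1) : π z ∈ et.1.image π ↔ z ∈ et.1 := by
  simpa using hiso.injOn.mem_image_iff (coe_subset_nodes het) hz

lemma image_injOn (hiso : IsIso π Δ H1 H2) :
    Set.InjOn (fun et : Finset V × ℝ => (et.1.image π, et.2 + Δ)) H1 := by
  rintro ⟨e, r⟩ he ⟨e', r'⟩ he' h
  obtain ⟨himage, htime⟩ := Prod.mk.inj h
  refine Prod.ext (Finset.image_injOn_powerset_of_injOn hiso.injOn ?_ ?_ himage)
    (add_right_cancel htime)
  · exact Finset.mem_powerset.2 fun _ hz => mem_nodes he hz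
  · exact Finset.mem_powerset.2 fun _ hz => mem_nodes he' hz

lemma weight_map (hiso : IsIso π Δ H1 H2) (α s : ℝ) {et : Finset V × ℝ} (het : et ∈ H1) :
    weight α (s + Δ) (et.1.image π, et.2 + Δ) = weight α s et := by
  simp only [weight, hiso.card_image het, add_sub_add_right_eq_sub]

lemma cand_map (hiso : IsIso π Δ H1 H2) {z : V} (hz : z ∈ nodes H1) (s : ℝ) :
    cand H2 (π z) (s + Δ) = (cand H1 z s).image fun et => (et.1.image π, et.2 + Δ) := by
  ext ⟨e', r'⟩
  simp only [mem_cand, Finset.mem_image]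
  constructor
  · rintro ⟨he', hz', hr'⟩
    obtain ⟨e, r, he, rfl, rfl⟩ := hiso.mem_map e' r' he'
    exact ⟨(e, r), ⟨he, (hiso.mem_image_iff he hz).1 hz', by linarith⟩, rfl⟩
  · rintro ⟨⟨e, r⟩, ⟨he, hze, hr⟩, h⟩
    obtain ⟨rfl, rfl⟩ := Prod.mk.inj h
    exact ⟨hiso.map_mem e r he, (hiso.mem_image_iff he hz).2 hze, by linarith⟩

lemma sum_weight_cand_map (hiso : IsIso π Δ H1 H2) (α : ℝ) {z : V} (hz : z ∈ nodes H1)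
    (s : ℝ) :
    ∑ et ∈ cand H2 (π z) (s + Δ), weight α (s + Δ) et = ∑ et ∈ cand H1 z s, weight α s et := by
  rw [hiso.cand_map hz, Finset.sum_image (hiso.image_injOn.mono fun _ h => (mem_cand.1 h).1)]
  exact Finset.sum_congr rfl fun et het => hiso.weight_map α s (mem_cand.1 het).1

end IsIso

section Walks

variable [DecidableEq V']

def pushStep (π : V → V') (Δ : ℝ) (p : (Finset V × ℝ) × V) : (Finset V' × ℝ) × V' :=
  ((p.1.1.image π, p.1.2 + Δ), π p.2)

variable [DecidableEq V] {π : V → V'} {Δ : ℝ} {H1 : Finset (Finset V × ℝ)}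
  {H2 : Finset (Finset V' × ℝ)}

lemma IsIso.validWalk_map_iff (hiso : IsIso π Δ H1 H2) :
    ∀ {z : V} {s : ℝ} {L : List ((Finset V × ℝ) × V)}, z ∈ nodes H1 →
      (∀ p ∈ L, p.1 ∈ H1 ∧ p.2 ∈ nodes H1) →
      (ValidWalk H2 (π z) (s + Δ) (L.map (pushStep π Δ)) ↔ ValidWalk H1 z s L)
  | _, _, [], _, _ => Iff.rfl
  | z, s, (et, z') :: L, hz, hL => by
    obtain ⟨het, hz'⟩ := hL _ List.mem_cons_self
    have ih := hiso.validWalk_map_iff (s := et.2) hz' fun p hp => hL p (List.mem_cons_of_mem _ hp)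
    simp only [List.map_cons, pushStep, ValidWalk, ih, hiso.mem_image_iff het hz,
      hiso.mem_image_iff het hz', hiso.injOn.ne_iff hz' hz, add_lt_add_iff_right, het,
      hiso.map_mem et.1 et.2 het, true_and]

lemma IsIso.walkProb_map (hiso : IsIso π Δ H1 H2) (α : ℝ) :
    ∀ {z : V} {s : ℝ} {L : List ((Finset V × ℝ) × V)}, z ∈ nodes H1 →
      (∀ p ∈ L, p.1 ∈ H1 ∧ p.2 ∈ nodes H1) →
      walkProb α H2 (π z) (s + Δ) (L.map (pushStep π Δ)) = walkProb α H1 z s L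
  | _, _, [], _, _ => rfl
  | z, s, (et, z') :: L, hz, hL => by
    obtain ⟨het, hz'⟩ := hL _ List.mem_cons_self
    simp only [List.map_cons, pushStep, walkProb, hiso.weight_map α s het,
      hiso.sum_weight_cand_map α hz, hiso.card_image het,
      hiso.walkProb_map α hz' fun p hp => hL p (List.mem_cons_of_mem _ hp)]

end Walks

section StepSeq

variable {H : Finset (Finset V × ℝ)} {m : ℕ}

lemma mem_nodes_of_sampleProb_ne_zero [DecidableEq V] {α : ℝ} {z : V} {s : ℝ}
    {f : StepSeq H m} (h : sampleProb α H z s f ≠ 0) (i : Fin m) : (f i).2 ∈ nodes H := by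
  have hvalid : ValidWalk H z s (stepToList f) := by
    by_contra hv
    exact h (if_neg hv)
  exact hvalid.mem_nodes _ (List.mem_ofFn.2 ⟨i, rfl⟩)

lemma nodeAt_mem {N : Set V} {z : V} {f : StepSeq H m} (hz : z ∈ N) (hf : ∀ i, (f i).2 ∈ N)
    (p : Fin (m + 1)) : nodeAt z f p ∈ N := by
  unfold nodeAt
  split_ifs
  exacts [hz, hf _]

end StepSeq

namespace IsIso

variable [DecidableEq V] [DecidableEq V'] {π : V → V'} {Δ : ℝ}
  {H1 : Finset (Finset V × ℝ)} {H2 : Finset (Finset V' × ℝ)} {m : ℕ}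

noncomputable def edgeEquiv (hiso : IsIso π Δ H1 H2) : {x // x ∈ H1} ≃ {x // x ∈ H2} :=
  Equiv.ofBijective (fun et => ⟨(et.1.1.image π, et.1.2 + Δ), hiso.map_mem _ _ et.2⟩) <| by
    refine ⟨fun et et' h => Subtype.ext (hiso.image_injOn et.2 et'.2 (congrArg Subtype.val h)),
      fun et' => ?_⟩
    obtain ⟨e, r, he, h1, h2⟩ := hiso.mem_map _ _ et'.2
    exact ⟨⟨(e, r), he⟩, Subtype.ext (Prod.ext h1.symm h2.symm)⟩

noncomputable def stepMap (hiso : IsIso π Δ H1 H2) (f : StepSeq H1 m) : StepSeq H2 m :=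
  Prod.map hiso.edgeEquiv π ∘ f

-- `invFunOn π (nodes H1)` inverts `π` only between `nodes H1` and `nodes H2`, whence the node
-- hypotheses below.
noncomputable def stepInv [Nonempty V] (hiso : IsIso π Δ H1 H2) (f : StepSeq H2 m) :
    StepSeq H1 m :=
  Prod.map hiso.edgeEquiv.symm (Function.invFunOn π (nodes H1)) ∘ f

lemma stepToList_stepMap (hiso : IsIso π Δ H1 H2) (f : StepSeq H1 m) :
    stepToList (hiso.stepMap f) = (stepToList f).map (pushStep π Δ) := by
  simp only [stepToList, List.map_ofFn]
  rfl

lemma stepMap_mem_nodes (hiso : IsIso π Δ H1 H2) {f : StepSeq H1 m}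
    (hf : ∀ i, (f i).2 ∈ nodes H1) (i : Fin m) : (hiso.stepMap f i).2 ∈ nodes H2 :=
  hiso.map_mem_nodes (hf i)

lemma stepInv_mem_nodes [Nonempty V] (hiso : IsIso π Δ H1 H2) {f : StepSeq H2 m}
    (hf : ∀ i, (f i).2 ∈ nodes H2) (i : Fin m) : (hiso.stepInv f i).2 ∈ nodes H1 := by
  have : (f i).2 ∈ (nodes H1).image π := hiso.image_nodes ▸ hf i
  exact Function.invFunOn_mem (by simpa using this)

lemma stepInv_stepMap [Nonempty V] (hiso : IsIso π Δ H1 H2) {f : StepSeq H1 m}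
    (hf : ∀ i, (f i).2 ∈ nodes H1) : hiso.stepInv (hiso.stepMap f) = f :=
  funext fun i => Prod.ext (hiso.edgeEquiv.symm_apply_apply _)
    (hiso.injOn.leftInvOn_invFunOn (hf i))

lemma stepMap_stepInv [Nonempty V] (hiso : IsIso π Δ H1 H2) {f : StepSeq H2 m}
    (hf : ∀ i, (f i).2 ∈ nodes H2) : hiso.stepMap (hiso.stepInv f) = f := by
  refine funext fun i => Prod.ext (hiso.edgeEquiv.apply_symm_apply _) ?_
  have : (f i).2 ∈ (nodes H1).image π := hiso.image_nodes ▸ hf i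
  exact Function.invFunOn_eq (by simpa using this)

lemma sampleProb_stepMap (hiso : IsIso π Δ H1 H2) (α : ℝ) {z : V} (hz : z ∈ nodes H1)
    (s : ℝ) {f : StepSeq H1 m} (hf : ∀ i, (f i).2 ∈ nodes H1) :
    sampleProb α H2 (π z) (s + Δ) (hiso.stepMap f) = sampleProb α H1 z s f := by
  have hsteps : ∀ p ∈ stepToList f, p.1 ∈ H1 ∧ p.2 ∈ nodes H1 := by
    intro p hp
    obtain ⟨i, rfl⟩ := List.mem_ofFn.1 hp
    exact ⟨(f i).1.2, hf i⟩
  simp only [sampleProb, stepToList_stepMap, hiso.validWalk_map_iff hz hsteps,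
    hiso.walkProb_map α hz hsteps]

lemma nodeAt_stepMap (hiso : IsIso π Δ H1 H2) (z : V) (f : StepSeq H1 m) (p : Fin (m + 1)) :
    nodeAt (π z) (hiso.stepMap f) p = π (nodeAt z f p) := by
  unfold nodeAt
  split_ifs <;> rfl

lemma nodeAt_stepMap_eq_iff (hiso : IsIso π Δ H1 H2) {z a : V} (hz : z ∈ nodes H1)
    (ha : a ∈ nodes H1) {f : StepSeq H1 m} (hf : ∀ i, (f i).2 ∈ nodes H1) (p : Fin (m + 1)) :
    nodeAt (π z) (hiso.stepMap f) p = π a ↔ nodeAt z f p = a := by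
  rw [nodeAt_stepMap]
  exact hiso.injOn.eq_iff (nodeAt_mem (N := (nodes H1 : Set V)) hz hf p) ha

end IsIso

lemma mem_nodes_of_jointProb_ne_zero [DecidableEq V] {α : ℝ} {H : Finset (Finset V × ℝ)}
    {g : Fin 3 → V} {t : ℝ} {m M : ℕ} {ω : Fin 3 → Fin M → StepSeq H m}
    (h : jointProb α H g t ω ≠ 0) (j : Fin 3) (i : Fin M) (k : Fin m) :
    (ω j i k).2 ∈ nodes H :=
  mem_nodes_of_sampleProb_ne_zero
    (Finset.prod_ne_zero_iff.1 (Finset.prod_ne_zero_iff.1 h j (Finset.mem_univ _)) i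
      (Finset.mem_univ _)) k

namespace IsIso

variable [DecidableEq V] [DecidableEq V'] {π : V → V'} {Δ : ℝ}
  {H1 : Finset (Finset V × ℝ)} {H2 : Finset (Finset V' × ℝ)} {m M : ℕ}
  {g : Fin 3 → V} {ω : Fin 3 → Fin M → StepSeq H1 m}

lemma jointProb_stepMap (hiso : IsIso π Δ H1 H2) (α : ℝ) (hg : ∀ j, g j ∈ nodes H1) (t : ℝ)
    (hω : ∀ j i k, (ω j i k).2 ∈ nodes H1) :
    jointProb α H2 (π ∘ g) (t + Δ) (fun j i => hiso.stepMap (ω j i)) = jointProb α H1 g t ω :=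
  Finset.prod_congr rfl fun j _ => Finset.prod_congr rfl fun i _ =>
    hiso.sampleProb_stepMap α (hg j) t (hω j i)

lemma appearsOn_stepMap (hiso : IsIso π Δ H1 H2) (hg : ∀ j, g j ∈ nodes H1)
    (hω : ∀ j i k, (ω j i k).2 ∈ nodes H1) {a : V} (ha : a ∈ nodes H1) :
    appearsOn (π ∘ g) (fun j i => hiso.stepMap (ω j i)) (π a) ↔ appearsOn g ω a :=
  exists_congr fun j => exists_congr fun i => exists_congr fun p =>
    hiso.nodeAt_stepMap_eq_iff (hg j) ha (hω j i) p

lemma gSample_stepMap (hiso : IsIso π Δ H1 H2) {z : V} (hz : z ∈ nodes H1)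
    {ws : Fin M → StepSeq H1 m} (hws : ∀ i k, (ws i k).2 ∈ nodes H1) {a : V}
    (ha : a ∈ nodes H1) :
    gSample (π z) (fun i => hiso.stepMap (ws i)) (π a) = gSample z ws a := by
  funext p
  unfold gSample
  congr 1
  ext i
  simp only [Finset.mem_filter, hiso.nodeAt_stepMap_eq_iff hz ha (hws i)]

lemma sampleDE_stepMap (hiso : IsIso π Δ H1 H2) {d d' : ℕ}
    (F1 : ((Fin d ⊕ Fin d) → ℝ) → (Fin d' → ℝ))
    (F2 : ((Fin (m + 1) ⊕ Fin (m + 1)) → ℕ) → (Fin d → ℝ))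
    (hg : ∀ j, g j ∈ nodes H1) (hω : ∀ j i k, (ω j i k).2 ∈ nodes H1) {a : V}
    (ha : a ∈ nodes H1) :
    sampleDE F1 F2 (π ∘ g) (fun j i => hiso.stepMap (ω j i)) (π a) = sampleDE F1 F2 g ω a := by
  simp only [sampleDE, Function.comp_apply, hiso.gSample_stepMap (hg _) (hω _) ha]

lemma sum_jointProb_eq (hiso : IsIso π Δ H1 H2) [Fintype V] [Fintype V'] [Nonempty V] (α : ℝ)
    (hg : ∀ j, g j ∈ nodes H1) (t : ℝ)
    (Q₁ : (Fin 3 → Fin M → StepSeq H1 m) → Prop) (Q₂ : (Fin 3 → Fin M → StepSeq H2 m) → Prop)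
    [DecidablePred Q₁] [DecidablePred Q₂]
    (hQ : ∀ ω, (∀ j i k, (ω j i k).2 ∈ nodes H1) →
      (Q₂ (fun j i => hiso.stepMap (ω j i)) ↔ Q₁ ω)) :
    ∑ ω, (if Q₁ ω then jointProb α H1 g t ω else 0) =
      ∑ ω', (if Q₂ ω' then jointProb α H2 (π ∘ g) (t + Δ) ω' else 0) := by
  calc _ = ∑ ω with ∀ j i k, (ω j i k).2 ∈ nodes H1, if Q₁ ω then jointProb α H1 g t ω else 0 :=
        (Finset.sum_filter_of_ne fun _ _ h =>
          mem_nodes_of_jointProb_ne_zero (ite_ne_right_iff.1 h).2).symm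
    _ = ∑ ω' with ∀ j i k, (ω' j i k).2 ∈ nodes H2,
          if Q₂ ω' then jointProb α H2 (π ∘ g) (t + Δ) ω' else 0 := by
        refine Finset.sum_nbij' (fun ω j i => hiso.stepMap (ω j i))
          (fun ω j i => hiso.stepInv (ω j i)) ?_ ?_ ?_ ?_ ?_ <;>
          simp only [Finset.mem_filter, Finset.mem_univ, true_and]
        · exact fun ω hω j i => hiso.stepMap_mem_nodes (hω j i)
        · exact fun ω hω j i => hiso.stepInv_mem_nodes (hω j i)
        · exact fun ω hω => funext fun j => funext fun i => hiso.stepInv_stepMap (hω j i)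
        · exact fun ω hω => funext fun j => funext fun i => hiso.stepMap_stepInv (hω j i)
        · exact fun ω hω => by
            rw [hiso.jointProb_stepMap α hg t hω]
            exact if_congr (hQ ω hω).symm rfl rfl
    _ = _ := Finset.sum_filter_of_ne fun _ _ h =>
        mem_nodes_of_jointProb_ne_zero (ite_ne_right_iff.1 h).2

lemma appearProb_map (hiso : IsIso π Δ H1 H2) [Fintype V] [Fintype V'] [Nonempty V] (α : ℝ)
    (hg : ∀ j, g j ∈ nodes H1) (t : ℝ) (m M : ℕ) {a : V} (ha : a ∈ nodes H1) :
    appearProb α H1 g t m M a = appearProb α H2 (π ∘ g) (t + Δ) m M (π a) :=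
  hiso.sum_jointProb_eq α hg t _ _ fun _ hω => hiso.appearsOn_stepMap hg hω ha

lemma appearEncProb_map (hiso : IsIso π Δ H1 H2) [Fintype V] [Fintype V'] [Nonempty V] (α : ℝ)
    (hg : ∀ j, g j ∈ nodes H1) (t : ℝ) (m M : ℕ) {d d' : ℕ}
    (F1 : ((Fin d ⊕ Fin d) → ℝ) → (Fin d' → ℝ))
    (F2 : ((Fin (m + 1) ⊕ Fin (m + 1)) → ℕ) → (Fin d → ℝ)) {a : V} (ha : a ∈ nodes H1)
    (x : Fin d' → ℝ) :
    appearEncProb α H1 g t m M F1 F2 a x =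
      appearEncProb α H2 (π ∘ g) (t + Δ) m M F1 F2 (π a) x := by
  unfold appearEncProb
  exact hiso.sum_jointProb_eq α hg t _ _ fun _ hω => by
    rw [hiso.appearsOn_stepMap hg hω ha, hiso.sampleDE_stepMap F1 F2 hg hω ha]

end IsIso

section Symmetry

variable {H : Finset (Finset V × ℝ)} {m M : ℕ}

lemma jointProb_comp_perm (α : ℝ) (g : Fin 3 → V) (t : ℝ) (σ : Equiv.Perm (Fin 3))
    (ω : Fin 3 → Fin M → StepSeq H m) :
    jointProb α H (g ∘ σ) t (ω ∘ σ) = jointProb α H g t ω :=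
  Equiv.prod_comp σ fun j => ∏ i, sampleProb α H (g j) t (ω j i)

lemma appearsOn_comp_perm (g : Fin 3 → V) (σ : Equiv.Perm (Fin 3))
    (ω : Fin 3 → Fin M → StepSeq H m) (a : V) :
    appearsOn (g ∘ σ) (ω ∘ σ) a ↔ appearsOn g ω a :=
  σ.exists_congr_left.trans <| by simp only [Function.comp_apply, Equiv.apply_symm_apply]; rfl

lemma sampleDE_comp_swap {d d' : ℕ} (F1 : ((Fin d ⊕ Fin d) → ℝ) → (Fin d' → ℝ))
    (F2 : ((Fin (m + 1) ⊕ Fin (m + 1)) → ℕ) → (Fin d → ℝ)) (g : Fin 3 → V)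
    (ω : Fin 3 → Fin M → StepSeq H m) (a : V) :
    sampleDE F1 F2 (g ∘ Equiv.swap 0 1) (ω ∘ Equiv.swap 0 1) a = sampleDE F1 F2 g ω a := by
  have h2 : Equiv.swap (0 : Fin 3) 1 2 = 2 := by decide
  simp only [sampleDE, Function.comp_apply, Equiv.swap_apply_left, Equiv.swap_apply_right, h2]
  congr 1
  funext j
  rcases j with j | j
  · exact add_comm _ _
  · exact abs_sub_comm _ _

variable [Fintype V]

lemma appearProb_comp_perm (α : ℝ) (g : Fin 3 → V) (t : ℝ) (σ : Equiv.Perm (Fin 3)) (a : V) :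
    appearProb α H (g ∘ σ) t m M a = appearProb α H g t m M a := by
  unfold appearProb
  refine (Fintype.sum_bijective (· ∘ σ) (σ.symm.arrowCongr (Equiv.refl _)).bijective _ _
    fun ω => ?_).symm
  simp only [appearsOn_comp_perm, jointProb_comp_perm]

lemma appearEncProb_comp_swap (α : ℝ) (g : Fin 3 → V) (t : ℝ) {d d' : ℕ}
    (F1 : ((Fin d ⊕ Fin d) → ℝ) → (Fin d' → ℝ))
    (F2 : ((Fin (m + 1) ⊕ Fin (m + 1)) → ℕ) → (Fin d → ℝ)) (a : V) (x : Fin d' → ℝ) :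
    appearEncProb α H (g ∘ Equiv.swap 0 1) t m M F1 F2 a x =
      appearEncProb α H g t m M F1 F2 a x := by
  unfold appearEncProb
  refine (Fintype.sum_bijective (· ∘ Equiv.swap 0 1)
    ((Equiv.swap 0 1).symm.arrowCongr (Equiv.refl _)).bijective _ _ fun ω => ?_).symm
  simp only [appearsOn_comp_perm, sampleDE_comp_swap, jointProb_comp_perm]

end Symmetry

lemma eq_or_eq_comp_swap_of_pair_eq {α : Type*} [DecidableEq α] {f g : Fin 3 → α}
    (h01 : ({f 0, f 1} : Finset α) = {g 0, g 1}) (h2 : f 2 = g 2) :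
    g = f ∨ g = f ∘ Equiv.swap 0 1 := by
  have h01' : ({f 0, f 1} : Set α) = {g 0, g 1} := by
    rw [← Finset.coe_pair, h01, Finset.coe_pair]
  have h2' : (Equiv.swap (0 : Fin 3) 1) 2 = 2 := by decide
  rcases Set.pair_eq_pair_iff.1 h01' with ⟨h0, h1⟩ | ⟨h0, h1⟩
  · left
    funext j
    fin_cases j <;> simp [h0, h1, h2]
  · right
    funext j
    fin_cases j <;> simp [h0, h1, h2, h2']

theorem de_distribution_eq_of_iso_general [Fintype V] [Fintype V'] [DecidableEq V] [DecidableEq V']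
    (H1 : Finset (Finset V × ℝ)) (H2 : Finset (Finset V' × ℝ))
    (α : ℝ) (m M : ℕ) {d d' : ℕ}
    (F1 : ((Fin d ⊕ Fin d) → ℝ) → (Fin d' → ℝ))
    (F2 : ((Fin (m + 1) ⊕ Fin (m + 1)) → ℕ) → (Fin d → ℝ))
    (u v w : V) (u' v' w' : V') (t t' : ℝ) (π : V → V') (Δ : ℝ) (hΔ : Δ = t' - t)
    (hiso : IsIso π Δ H1 H2)
    (hUV : ({π u, π v} : Finset V') = {u', v'}) (hW : π w = w')
    (hreach : ∀ z0, (z0 = u ∨ z0 = v ∨ z0 = w) →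
      ∀ L : List ((Finset V × ℝ) × V), L.length ≤ m → ValidWalk H1 z0 t L →
        (cand H1 (endState z0 t L).1 (endState z0 t L).2).Nonempty)
    (a : V) (ha : a ∈ nodes H1) :
    (∀ x : Fin d' → ℝ,
      appearEncProb α H1 ![u, v, w] t m M F1 F2 a x =
        appearEncProb α H2 ![u', v', w'] t' m M F1 F2 (π a) x) ∧
    (0 < appearProb α H1 ![u, v, w] t m M a →
      0 < appearProb α H2 ![u', v', w'] t' m M (π a) →
      ∀ x : Fin d' → ℝ,
        appearEncProb α H1 ![u, v, w] t m M F1 F2 a x /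
            appearProb α H1 ![u, v, w] t m M a =
          appearEncProb α H2 ![u', v', w'] t' m M F1 F2 (π a) x /
            appearProb α H2 ![u', v', w'] t' m M (π a)) := by
  have : Nonempty V := ⟨a⟩
  have ht' : t' = t + Δ := by rw [hΔ]; ring
  have hstart : ∀ z, (z = u ∨ z = v ∨ z = w) → z ∈ nodes H1 := fun z hz =>
    mem_nodes_of_cand_nonempty (hreach z hz [] (Nat.zero_le m) trivial)
  have hstarts : ∀ j, ![u, v, w] j ∈ nodes H1 := by
    intro j
    fin_cases j
    exacts [hstart u (by simp), hstart v (by simp), hstart w (by simp)]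
  have hswapped : ∀ j, (![u, v, w] ∘ Equiv.swap 0 1) j ∈ nodes H1 := fun j => hstarts _
  obtain ⟨henc, happ⟩ : (∀ x, appearEncProb α H1 ![u, v, w] t m M F1 F2 a x =
        appearEncProb α H2 ![u', v', w'] t' m M F1 F2 (π a) x) ∧
      appearProb α H1 ![u, v, w] t m M a = appearProb α H2 ![u', v', w'] t' m M (π a) := by
    rw [ht']
    rcases eq_or_eq_comp_swap_of_pair_eq (f := π ∘ ![u, v, w]) (g := ![u', v', w']) hUV hW
      with h | h <;> rw [h]
    · exact ⟨hiso.appearEncProb_map α hstarts t m M F1 F2 ha,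
        hiso.appearProb_map α hstarts t m M ha⟩
    · rw [Function.comp_assoc]
      refine ⟨fun x => ?_, ?_⟩
      · rw [← appearEncProb_comp_swap]
        exact hiso.appearEncProb_map α hswapped t m M F1 F2 ha x
      · rw [← appearProb_comp_perm _ _ _ (Equiv.swap 0 1)]
        exact hiso.appearProb_map α hswapped t m M ha
  exact ⟨henc, fun _ _ x => by rw [henc x, happ]⟩

theorem de_distribution_eq_of_iso [Fintype V] [Fintype V'] [DecidableEq V] [DecidableEq V']
    (H1 : Finset (Finset V × ℝ)) (H2 : Finset (Finset V' × ℝ))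
    (hcard1 : ∀ et ∈ H1, 2 ≤ et.1.card) (hcard2 : ∀ et ∈ H2, 2 ≤ et.1.card)
    (α : ℝ) (hα : 0 ≤ α) (m M : ℕ) {d d' : ℕ}
    (F1 : ((Fin d ⊕ Fin d) → ℝ) → (Fin d' → ℝ))
    (F2 : ((Fin (m + 1) ⊕ Fin (m + 1)) → ℕ) → (Fin d → ℝ))
    (u v w : V) (u' v' w' : V') (t t' : ℝ) (π : V → V') (Δ : ℝ) (hΔ : Δ = t' - t)
    (hiso : IsIso π Δ H1 H2)
    (hUV : ({π u, π v} : Finset V') = {u', v'}) (hW : π w = w')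
    (hreach : ∀ z0, (z0 = u ∨ z0 = v ∨ z0 = w) →
      ∀ L : List ((Finset V × ℝ) × V), L.length ≤ m → ValidWalk H1 z0 t L →
        (cand H1 (endState z0 t L).1 (endState z0 t L).2).Nonempty)
    (a : V) (ha : a ∈ nodes H1) :
    (∀ x : Fin d' → ℝ,
      appearEncProb α H1 ![u, v, w] t m M F1 F2 a x =
        appearEncProb α H2 ![u', v', w'] t' m M F1 F2 (π a) x) ∧
    (0 < appearProb α H1 ![u, v, w] t m M a →
      0 < appearProb α H2 ![u', v', w'] t' m M (π a) →
      ∀ x : Fin d' → ℝ,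
        appearEncProb α H1 ![u, v, w] t m M F1 F2 a x /
            appearProb α H1 ![u, v, w] t m M a =
          appearEncProb α H2 ![u', v', w'] t' m M F1 F2 (π a) x /
            appearProb α H2 ![u', v', w'] t' m M (π a)) :=
  de_distribution_eq_of_iso_general H1 H2 α m M F1 F2 u v w u' v' w' t t' π Δ hΔ hiso hUV hW hreach
    a ha

end HIT
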